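/- Let η := 19/20. Let W_η : (Fin 2 × Fin 2) → Fin 3 → ℝ be the channel with W_η(1+x₂ | (1,x₂)) = η and W_η(0 | (1,x₂)) = 1−η (other entries of those rows zero), and W_η(· | (0,x₂)) = (1 − η/2, η/4, η/4) for both x₂. Let P be the prior P(x₁,x₂) := π(x₁)·(1/2) with π(1) = 15/17 and π(0) = 2/17, and let Q(x,y) := P(x)·W_η(y|x). Then the mutual information of Q satisfies I(Q) < 1. -/

import Mathlib

open Finset

/-- The detector efficiency η = 95%. -/
noncomputable def eta : ℝ := 19 / 20

/-- The two-sender unassisted single-particle channel with detector efficiency η: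
clicks are lost independently with probability 1−η and registered as the vacuum outcome 0. -/
noncomputable def Weta : Fin 2 × Fin 2 → Fin 3 → ℝ := fun x y =>
  if x.1 = 1 then
    (if (y : ℕ) = 1 + (x.2 : ℕ) then eta else if y = 0 then 1 - eta else 0)
  else
    (if y = 0 then 1 - eta / 2 else eta / 4)

/-- The prior `P(x₁,x₂) = π(x₁)·(1/2)` with `π(1) = 15/17`, `π(0) = 2/17`. -/
noncomputable def P : Fin 2 × Fin 2 → ℝ := fun x =>
  (if x.1 = 1 then (15 : ℝ) / 17 else 2 / 17) * (1 / 2)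

/-- The joint distribution `Q(x,y) = P(x)·W_η(y|x)`. -/
noncomputable def Q : Fin 2 × Fin 2 → Fin 3 → ℝ := fun x y => P x * Weta x y

/-! Each row of `W_η` sums to one, so `Q_X = P` and the output marginal is `Q_Y = (9, 38, 38)/85`.
All weights `Q(x,y)` are multiples of `1/340`, which turns `I(Q)` into `(1/340) ∑ nᵢ log₂ rᵢ` with
natural `nᵢ` and rational `rᵢ`; then `I(Q) < 1` is the exact rational inequality
`∏ rᵢ ^ nᵢ < 2 ^ 340` (equivalently `17^340 · 7^21 < 3^51 · 2^1383`). Numerically `I(Q) ≈ 0.955`. -/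

open Real

theorem sum_mul_logb_lt_of_prod_pow_lt {ι : Type*} (s : Finset ι) {b : ℝ} (hb : 1 < b)
    {r : ι → ℝ} (n : ι → ℕ) (N : ℕ) (hr : ∀ i ∈ s, 0 < r i)
    (h : ∏ i ∈ s, r i ^ n i < b ^ N) : ∑ i ∈ s, n i * logb b (r i) < N := by
  have hlogb : logb b (∏ i ∈ s, r i ^ n i) = ∑ i ∈ s, n i * logb b (r i) := by
    rw [logb_prod _ _ fun i hi => (pow_pos (hr i hi) _).ne']
    exact sum_congr rfl fun i _ => logb_pow _ _ _
  rwa [← hlogb, logb_lt_iff_lt_rpow hb (prod_pos fun i hi => pow_pos (hr i hi) _), rpow_natCast]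

theorem sum_Weta (x : Fin 2 × Fin 2) : ∑ y, Weta x y = 1 := by
  rcases x with ⟨x₁, x₂⟩
  fin_cases x₁ <;> fin_cases x₂ <;> norm_num [Weta, Fin.sum_univ_succ, eta]

theorem sum_Q_right (x : Fin 2 × Fin 2) : ∑ y, Q x y = P x := by
  simp only [Q, ← mul_sum, sum_Weta, mul_one]

theorem sum_Q_left (y : Fin 3) : ∑ x, Q x y = if y = 0 then 9 / 85 else 38 / 85 := by
  fin_cases y <;> norm_num [Q, P, Weta, eta, Fintype.sum_prod_type, Fin.sum_univ_succ]

theorem mutualInfo_Q_eq :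
    ∑ x : Fin 2 × Fin 2, ∑ y : Fin 3,
      Q x y * logb 2 (Q x y / ((∑ y', Q x y') * (∑ x', Q x' y))) =
    (15 * logb 2 (17 / 36) + 285 * logb 2 (17 / 8) + 21 * logb 2 (119 / 24)
      + 19 * logb 2 (17 / 32)) / 340 := by
  simp only [sum_Q_right, sum_Q_left]
  norm_num [Fintype.sum_prod_type, Fin.sum_univ_succ, Q, P, Weta, eta]
  ring

theorem prod_ratio_pow_lt_two_pow :
    (17 / 36 : ℝ) ^ 15 * (17 / 8) ^ 285 * (119 / 24) ^ 21 * (17 / 32) ^ 19 < 2 ^ 340 := by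
  have hℚ : (17 / 36 : ℚ) ^ 15 * (17 / 8) ^ 285 * (119 / 24) ^ 21 * (17 / 32) ^ 19 < 2 ^ 340 := by
    -- `norm_num` declines to evaluate powers this large; the kernel's exact `ℚ` arithmetic does it.
    decide +kernel
  have hℝ := (Rat.cast_lt (K := ℝ)).2 hℚ
  push_cast at hℝ
  exact hℝ

/-- At detector efficiency η = 95% the quantum rate-sum advantage disappears:
the mutual information drops below the classical bound of 1 bit. -/
theorem detection_loophole_kills_advantage :
    ∑ x : Fin 2 × Fin 2, ∑ y : Fin 3,
      Q x y * Real.logb 2 (Q x y / ((∑ y', Q x y') * (∑ x', Q x' y))) < 1 := by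
  rw [mutualInfo_Q_eq, div_lt_one (by norm_num)]
  have key := sum_mul_logb_lt_of_prod_pow_lt univ one_lt_two ![15, 285, 21, 19] 340
    (r := ![17 / 36, 17 / 8, 119 / 24, 17 / 32]) (by simp [Fin.forall_fin_succ])
    (by simpa [Fin.prod_univ_four] using prod_ratio_pow_lt_two_pow)
  simpa [Fin.sum_univ_four] using key
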